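/- Let β : ℝ → ℝ⁴ be a smooth curve with ⟨β(t),β(t)⟩ = 1 and β''(t) = −⟨β'(t),β'(t)⟩·β(t) for all t ∈ ℝ (an affinely parametrized geodesic of S³₁). Then ⟨β(0), β(t)⟩ ≥ −1 for all t ∈ ℝ. In particular, if p, q ∈ S³₁ satisfy ⟨p,q⟩ < −1, then there exists no geodesic of S³₁ joining p and q. -/

import Mathlib

open Real

/-- The Minkowski scalar product on `ℝ⁴₁`:
`⟨x,y⟩ = -x₁y₁ + x₂y₂ + x₃y₃ + x₄y₄`. -/
noncomputable def mdot (x y : Fin 4 → ℝ) : ℝ :=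
  -(x 0 * y 0) + x 1 * y 1 + x 2 * y 2 + x 3 * y 3

/-!
Fix `s` and put `f t = ⟨β s, β t⟩`. The geodesic equation gives `f'' = -C f` with the constant
`C = ⟨β', β'⟩`, and `f s = 1`, `f' s = 0` since `⟨β, β⟩ = 1`. Hence the energy `C f² + f'²`
equals `C` throughout. For `C > 0` this forces `f² ≤ 1`; for `C = 0` it forces `f' = 0`, so
`f = 1`; for `C < 0` it forces `f² ≥ 1`, so the continuous `f` never leaves `[1, ∞)`.
-/

lemma eq_of_forall_hasDerivAt_zero {f : ℝ → ℝ} (hf : ∀ t, HasDerivAt f 0 t) (s t : ℝ) :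
    f t = f s :=
  is_const_of_deriv_eq_zero (fun x => (hf x).differentiableAt) (fun x => (hf x).deriv) t s

section Harmonic

variable {f g : ℝ → ℝ} {C : ℝ}

lemma harmonic_energy_eq (hf : ∀ t, HasDerivAt f (g t) t) (hg : ∀ t, HasDerivAt g (-C * f t) t)
    (s t : ℝ) : C * f t ^ 2 + g t ^ 2 = C * f s ^ 2 + g s ^ 2 :=
  eq_of_forall_hasDerivAt_zero (fun u =>
    ((((hf u).pow 2).const_mul C).add ((hg u).pow 2)).congr_deriv (by simp only [Nat.cast_ofNat, Nat.add_one_sub_one, pow_one]; ring)) s t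

lemma neg_one_le_of_harmonic (hf : ∀ t, HasDerivAt f (g t) t)
    (hg : ∀ t, HasDerivAt g (-C * f t) t) {s : ℝ} (hfs : f s = 1) (hgs : g s = 0) (t : ℝ) :
    -1 ≤ f t := by
  have energy : ∀ u, C * f u ^ 2 + g u ^ 2 = C := fun u => by
    simpa [hfs, hgs] using harmonic_energy_eq hf hg s u
  rcases lt_trichotomy C 0 with hC | rfl | hC
  · have one_le_sq : ∀ u, 1 ≤ f u ^ 2 := fun u => by nlinarith [energy u, sq_nonneg (g u)]
    by_contra! hft
    have hzero : (0 : ℝ) ∈ Set.uIcc (f s) (f t) := by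
      rw [Set.mem_uIcc, hfs]; right; constructor <;> linarith
    have hcont : Continuous f := continuous_iff_continuousAt.2 fun u => (hf u).continuousAt
    obtain ⟨u, -, hu⟩ := intermediate_value_uIcc hcont.continuousOn hzero
    have h := one_le_sq u
    rw [hu] at h
    norm_num at h
  · have hg0 : ∀ u, g u = 0 := fun u => by simpa using energy u
    have hft := eq_of_forall_hasDerivAt_zero (fun u => hg0 u ▸ hf u) s t
    linarith
  · have sq_le_one : f t ^ 2 ≤ 1 := by nlinarith [energy t, sq_nonneg (g t)]
    nlinarith

end Harmonic

lemma mdot_comm (x y : Fin 4 → ℝ) : mdot x y = mdot y x := by unfold mdot; ring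

lemma mdot_smul_right (r : ℝ) (x y : Fin 4 → ℝ) : mdot x (r • y) = r * mdot x y := by
  simp only [mdot, Pi.smul_apply, smul_eq_mul]; ring

lemma mdot_zero_left (x : Fin 4 → ℝ) : mdot 0 x = 0 := by simp [mdot]

lemma HasDerivAt.mdot {u w : ℝ → Fin 4 → ℝ} {u' w' : Fin 4 → ℝ} {t : ℝ}
    (hu : HasDerivAt u u' t) (hw : HasDerivAt w w' t) :
    HasDerivAt (fun t => mdot (u t) (w t)) (mdot u' (w t) + mdot (u t) w') t := by
  have hu' (i : Fin 4) := hasDerivAt_pi.mp hu i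
  have hw' (i : Fin 4) := hasDerivAt_pi.mp hw i
  exact (((((hu' 0).mul (hw' 0)).neg.add ((hu' 1).mul (hw' 1))).add
    ((hu' 2).mul (hw' 2))).add ((hu' 3).mul (hw' 3))).congr_deriv (by unfold _root_.mdot; ring)

lemma HasDerivAt.mdot_const_left {w : ℝ → Fin 4 → ℝ} {w' : Fin 4 → ℝ} {t : ℝ} (a : Fin 4 → ℝ)
    (hw : HasDerivAt w w' t) : HasDerivAt (fun t => _root_.mdot a (w t)) (_root_.mdot a w') t := by
  simpa [mdot_zero_left] using (hasDerivAt_const t a).mdot hw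

section Geodesic

variable {β v : ℝ → Fin 4 → ℝ} (hβ : ∀ t, HasDerivAt β (v t) t)
  (hv : ∀ t, HasDerivAt v (-mdot (v t) (v t) • β t) t) (hβ1 : ∀ t, mdot (β t) (β t) = 1)
include hβ hβ1

lemma mdot_velocity_eq_zero (t : ℝ) : mdot (β t) (v t) = 0 := by
  have h := ((hβ t).mdot (hβ t)).unique (by simp_rw [hβ1]; exact hasDerivAt_const t 1)
  rw [mdot_comm (v t)] at h
  linarith

include hv

lemma mdot_velocity_self_eq (t : ℝ) : mdot (v t) (v t) = mdot (v 0) (v 0) :=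
  eq_of_forall_hasDerivAt_zero (fun u => ((hv u).mdot (hv u)).congr_deriv (by
    rw [mdot_comm _ (v u), mdot_smul_right, mdot_comm (v u) (β u), mdot_velocity_eq_zero hβ hβ1]
    ring)) 0 t

lemma neg_one_le_mdot_of_geodesic (s t : ℝ) : -1 ≤ mdot (β s) (β t) := by
  refine neg_one_le_of_harmonic (g := fun u => mdot (β s) (v u)) (C := mdot (v 0) (v 0))
    (fun u => (hβ u).mdot_const_left (β s)) (fun u => ?_) (hβ1 s)
    (mdot_velocity_eq_zero hβ hβ1 s) t
  refine ((hv u).mdot_const_left (β s)).congr_deriv ?_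
  rw [mdot_smul_right, mdot_velocity_self_eq hβ hv hβ1]

end Geodesic

/-- Along any affinely parametrized geodesic `β` of `S³₁`, `⟨β(0), β(t)⟩ ≥ -1`;
in particular, points `p, q ∈ S³₁` with `⟨p,q⟩ < -1` cannot be joined by a geodesic. -/
theorem no_geodesic_joining
    (β : ℝ → Fin 4 → ℝ) (hβsm : ContDiff ℝ (⊤ : ℕ∞) β)
    (hβ1 : ∀ t, mdot (β t) (β t) = 1)
    (hgeo : ∀ t, deriv (deriv β) t = -(mdot (deriv β t) (deriv β t)) • β t) :
    (∀ t, -1 ≤ mdot (β 0) (β t)) ∧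
    (∀ p q : Fin 4 → ℝ, mdot p p = 1 → mdot q q = 1 → mdot p q < -1 →
      ¬ ∃ t₀ t₁ : ℝ, β t₀ = p ∧ β t₁ = q) := by
  have hβ : ∀ t, HasDerivAt β (deriv β t) t :=
    fun t => (hβsm.differentiable (by simp) t).hasDerivAt
  have hv : ∀ t, HasDerivAt (deriv β) (-mdot (deriv β t) (deriv β t) • β t) t := fun t => by
    rw [← hgeo]
    exact ((contDiff_infty_iff_deriv.mp hβsm).2.differentiable (by simp) t).hasDerivAt
  have key := neg_one_le_mdot_of_geodesic hβ hv hβ1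
  refine ⟨key 0, ?_⟩
  rintro p q - - hpq ⟨t₀, t₁, rfl, rfl⟩
  exact (key t₀ t₁).not_gt hpq
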